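/- For every v ∈ (0,r), the speculator's expected profit is strictly higher under the second-price rule than under the first-price rule for the same equilibrium cutoff: Π*(v) > Π⋆(v). -/

import Mathlib

open MeasureTheory Set

/-- Second-price acquisition price: `p*(v) = v + ∫_v^r (1−F x)^(N−1) dx`. -/
noncomputable def pstar (F : ℝ → ℝ) (N : ℕ) (r : ℝ) (v : ℝ) : ℝ :=
  v + ∫ x in v..r, (1 - F x) ^ (N - 1)

/-- Speculator's expected payment from a second-price subgame against `m` sellers. -/
noncomputable def y (F : ℝ → ℝ) (r : ℝ) (m : ℕ) (v : ℝ) : ℝ :=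
  v + ∫ x in v..r, ((1 - F x) / (1 - F v)) ^ m

/-- Speculator's expected profit in the second-price speculation game at cutoff `v`. -/
noncomputable def PiSPA (F : ℝ → ℝ) (N : ℕ) (r : ℝ) (v : ℝ) : ℝ :=
  (∑ m ∈ Finset.range N,
      (N.choose m : ℝ) * (F v) ^ (N - m) * (1 - F v) ^ m * y F r m v)
    - N * F v * pstar F N r v

/-- Truncated conditional CDF `G(x; v) = (F x − F v)/(1 − F v)`. -/
noncomputable def G (F : ℝ → ℝ) (v x : ℝ) : ℝ := (F x - F v) / (1 - F v)

/-- `ubar_b(m, v) = max_{b ∈ [v, r]} b (1 − G(b; v))^m`. -/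
noncomputable def ubarb (F : ℝ → ℝ) (r : ℝ) (m : ℕ) (v : ℝ) : ℝ :=
  sSup ((fun b => b * (1 - G F v b) ^ m) '' Icc v r)

/-- First-price acquisition price `p⋆(v)`. -/
noncomputable def pFPA (F : ℝ → ℝ) (N : ℕ) (r : ℝ) (v : ℝ) : ℝ :=
  v + (∫ x in v..r, (1 - F x) ^ (N - 1)) +
    ∑ m ∈ Finset.range (N - 1),
      ((N - 1).choose m : ℝ) * (1 - F v) ^ m * (F v) ^ (N - 1 - m) *
        (ubarb F r (m + 1) v - v)

/-- Speculator's expected profit in the first-price speculation game at cutoff `v`. -/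
noncomputable def PiFPA (F : ℝ → ℝ) (N : ℕ) (r : ℝ) (v : ℝ) : ℝ :=
  (∑ m ∈ Finset.Icc 1 (N - 1),
      (N.choose m : ℝ) * (1 - F v) ^ m * (F v) ^ (N - m) * ubarb F r m v)
    + (F v) ^ N * r - N * F v * pFPA F N r v

/-!
Write `q = F v`. Splitting both profits by the number `m` of sellers above the cutoff,
`Π* − Π⋆ = ∑_{m ≥ 1} C(N,m) q^(N−m) (1−q)^m (y(m,v) − ū(m,v))
  + N q ∑_m C(N−1,m) (1−q)^m q^(N−1−m) (ū(m+1,v) − v)`,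
the `m = 0` terms cancelling because `y(0,v) = r`. So it suffices that `v ≤ ū(m,v) < y(m,v)`.
With `φ = (1 − G(·;v))^m`, antitone with `φ(v) = 1`, we have `y(m,v) = v + ∫_v^r φ`, while
`ū(m,v)` is the maximum of `b φ(b) = v φ(b) + (b − v) φ(b) ≤ v + ∫_v^b φ`.
-/

section AntitoneWeight

variable {φ : ℝ → ℝ} {a b v r : ℝ}

lemma AntitoneOn.mul_sub_le_integral (hab : a ≤ b) (hφ : AntitoneOn φ (Icc a b)) :
    (b - a) * φ b ≤ ∫ x in a..b, φ x := by
  have hint : IntervalIntegrable φ volume a b :=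
    (hφ.mono (uIcc_of_le hab).subset).intervalIntegrable
  simpa using intervalIntegral.integral_mono_on hab intervalIntegrable_const hint
    fun x hx => hφ hx ⟨hab, le_rfl⟩ hx.2

/-- Strictness comes from `∫_b^r φ > 0` when `b < r`, and from `φ r < 1` when `b = r`. -/
lemma AntitoneOn.mul_lt_add_integral (hv : 0 < v) (hb : b ∈ Icc v r)
    (hφ : AntitoneOn φ (Icc v r)) (hφv : φ v = 1) (hφpos : ∀ x ∈ Ioo v r, 0 < φ x)
    (hφr : φ r < 1) : b * φ b < v + ∫ x in v..r, φ x := by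
  obtain ⟨hvb, hbr⟩ := hb
  have hφb : φ b ≤ 1 := hφv ▸ hφ ⟨le_rfl, hvb.trans hbr⟩ ⟨hvb, hbr⟩ hvb
  have hshade : (b - v) * φ b ≤ ∫ x in v..b, φ x :=
    (hφ.mono (Icc_subset_Icc_right hbr)).mul_sub_le_integral hvb
  rcases hbr.lt_or_eq with hbr | rfl
  · have hint : ∀ c d, v ≤ c → c ≤ d → d ≤ r → IntervalIntegrable φ volume c d :=
      fun c d hvc hcd hdr => (hφ.mono <| by
        rw [uIcc_of_le hcd]; exact Icc_subset_Icc hvc hdr).intervalIntegrable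
    have htail : 0 < ∫ x in b..r, φ x :=
      intervalIntegral.intervalIntegral_pos_of_pos_on (hint b r hvb hbr.le le_rfl)
        (fun x hx => hφpos x ⟨hvb.trans_lt hx.1, hx.2⟩) hbr
    rw [← intervalIntegral.integral_add_adjacent_intervals (hint v b le_rfl hvb hbr.le)
      (hint b r hvb hbr.le le_rfl)]
    nlinarith
  · nlinarith

end AntitoneWeight

section Survival

variable {F : ℝ → ℝ} {v r : ℝ}

lemma one_sub_G (hFv : F v ≠ 1) (x : ℝ) : 1 - G F v x = (1 - F x) / (1 - F v) := by
  rw [G]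
  field_simp [sub_ne_zero.mpr hFv.symm]
  ring

lemma continuousOn_mul_one_sub_G_pow (hF : ContinuousOn F (Icc v r)) (m : ℕ) :
    ContinuousOn (fun b => b * (1 - G F v b) ^ m) (Icc v r) := by
  unfold G
  fun_prop

lemma le_ubarb (hF : ContinuousOn F (Icc v r)) (hvr : v ≤ r) (m : ℕ) : v ≤ ubarb F r m v := by
  refine le_csSup (isCompact_Icc.bddAbove_image (continuousOn_mul_one_sub_G_pow hF m))
    ⟨v, left_mem_Icc.mpr hvr, ?_⟩
  simp [G]

lemma ubarb_lt_y (hF : ContinuousOn F (Icc v r)) (hFs : StrictMonoOn F (Icc v r))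
    (hFr : F r ≤ 1) (hv : 0 < v) (hvr : v < r) {m : ℕ} (hm : m ≠ 0) :
    ubarb F r m v < y F r m v := by
  have hvmem : v ∈ Icc v r := left_mem_Icc.mpr hvr.le
  have hrmem : r ∈ Icc v r := right_mem_Icc.mpr hvr.le
  have hFv : F v < 1 := (hFs hvmem hrmem hvr).trans_le hFr
  have hden : 0 < 1 - F v := sub_pos.mpr hFv
  have hsurv : ∀ x ∈ Icc v r, 0 ≤ 1 - F x := fun x hx =>
    sub_nonneg.mpr ((hFs.monotoneOn hx hrmem hx.2).trans hFr)
  rw [ubarb, isCompact_Icc.sSup_lt_iff_of_continuous (nonempty_Icc.mpr hvr.le)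
    (continuousOn_mul_one_sub_G_pow hF m)]
  intro b hb
  simp only [one_sub_G hFv.ne]
  refine AntitoneOn.mul_lt_add_integral (φ := fun x => ((1 - F x) / (1 - F v)) ^ m) hv hb ?_
    (by simp [div_self hden.ne']) ?_ ?_
  · intro x hx z hz hxz
    have := hFs.monotoneOn hx hz hxz
    dsimp only
    gcongr
    exact div_nonneg (hsurv z hz) hden.le
  · intro x hx
    have : F x < F r := hFs (Ioo_subset_Icc_self hx) hrmem hx.2
    exact pow_pos (div_pos (by linarith) hden) m
  · have : F v < F r := hFs hvmem hrmem hvr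
    exact pow_lt_one₀ (div_nonneg (hsurv r hrmem) hden.le)
      ((div_lt_one hden).mpr (by linarith)) hm

end Survival

open Finset in
lemma PiSPA_sub_PiFPA (F : ℝ → ℝ) {N : ℕ} (hN : N ≠ 0) (r v : ℝ) :
    PiSPA F N r v - PiFPA F N r v =
      (∑ m ∈ Icc 1 (N - 1),
          (N.choose m : ℝ) * F v ^ (N - m) * (1 - F v) ^ m * (y F r m v - ubarb F r m v))
        + N * F v * ∑ m ∈ range (N - 1),
          ((N - 1).choose m : ℝ) * (1 - F v) ^ m * F v ^ (N - 1 - m)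
            * (ubarb F r (m + 1) v - v) := by
  obtain ⟨n, rfl⟩ : ∃ n, N = n + 1 := ⟨N - 1, by omega⟩
  have hy0 : y F r 0 v = r := by simp [y]
  have hsplit :
      ∑ m ∈ range (n + 1),
          ((n + 1).choose m : ℝ) * F v ^ (n + 1 - m) * (1 - F v) ^ m * y F r m v
        = F v ^ (n + 1) * r + ∑ m ∈ Icc 1 n,
          ((n + 1).choose m : ℝ) * F v ^ (n + 1 - m) * (1 - F v) ^ m * y F r m v := by
    rw [range_eq_Ico, sum_eq_sum_Ico_succ_bot n.succ_pos, ← Finset.Ico_add_one_right_eq_Icc]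
    simp [hy0]
  have hgap : ∑ m ∈ Icc 1 n,
      ((n + 1).choose m : ℝ) * F v ^ (n + 1 - m) * (1 - F v) ^ m * (y F r m v - ubarb F r m v)
      = ∑ m ∈ Icc 1 n, ((n + 1).choose m : ℝ) * F v ^ (n + 1 - m) * (1 - F v) ^ m * y F r m v
        - ∑ m ∈ Icc 1 n,
            ((n + 1).choose m : ℝ) * (1 - F v) ^ m * F v ^ (n + 1 - m) * ubarb F r m v := by
    rw [← sum_sub_distrib]
    exact sum_congr rfl fun m _ => by ring
  simp only [PiSPA, PiFPA, pstar, pFPA, Nat.add_sub_cancel, hsplit, hgap]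
  push_cast
  ring

theorem PiSPA_gt_PiFPA_same_cutoff_general
    (F f : ℝ → ℝ) (N : ℕ) (hN : 2 ≤ N)
    (hderiv : ∀ x ∈ Icc (0 : ℝ) 1, HasDerivAt F (f x) x)
    (hfpos : ∀ x ∈ Ioo (0 : ℝ) 1, 0 < f x)
    (hF0 : F 0 = 0) (hF1 : F 1 = 1)
    (r : ℝ) (hr : r ∈ Ioc (0 : ℝ) 1) :
    ∀ v ∈ Ioo (0 : ℝ) r, PiFPA F N r v < PiSPA F N r v := by
  rintro v ⟨hv, hvr⟩
  have hFc : ContinuousOn F (Icc 0 1) := fun x hx =>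
    (hderiv x hx).continuousAt.continuousWithinAt
  have hFs : StrictMonoOn F (Icc 0 1) :=
    strictMonoOn_of_hasDerivWithinAt_pos (convex_Icc 0 1) hFc
      (fun x hx => (hderiv x (interior_subset hx)).hasDerivWithinAt)
      (fun x hx => hfpos x (by rwa [interior_Icc] at hx))
  have hsub : Icc v r ⊆ Icc 0 1 := Icc_subset_Icc hv.le hr.2
  have hFv0 : 0 < F v := hF0 ▸ hFs ⟨le_rfl, zero_le_one⟩ (hsub ⟨le_rfl, hvr.le⟩) hv
  have hFv1 : 0 < 1 - F v := sub_pos.mpr <|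
    hF1 ▸ hFs (hsub ⟨le_rfl, hvr.le⟩) ⟨zero_le_one, le_rfl⟩ (hvr.trans_le hr.2)
  have hFr : F r ≤ 1 :=
    hF1 ▸ hFs.monotoneOn (hsub ⟨hvr.le, le_rfl⟩) ⟨zero_le_one, le_rfl⟩ hr.2
  rw [← sub_pos, PiSPA_sub_PiFPA F (by omega)]
  refine add_pos_of_pos_of_nonneg (Finset.sum_pos (fun m hm => ?_) ⟨1, by simp; omega⟩) ?_
  · rw [Finset.mem_Icc] at hm
    have hC : 0 < (N.choose m : ℝ) := by exact_mod_cast Nat.choose_pos (by omega)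
    exact mul_pos (by positivity)
      (sub_pos.mpr (ubarb_lt_y (hFc.mono hsub) (hFs.mono hsub) hFr hv hvr (by omega)))
  · exact mul_nonneg (by positivity) <| Finset.sum_nonneg fun m _ =>
      mul_nonneg (by positivity) (sub_nonneg.mpr (le_ubarb (hFc.mono hsub) hvr.le _))

theorem PiSPA_gt_PiFPA_same_cutoff
    (F f : ℝ → ℝ) (N : ℕ) (hN : 2 ≤ N)
    (hderiv : ∀ x ∈ Icc (0 : ℝ) 1, HasDerivAt F (f x) x)
    (hfc : ContinuousOn f (Icc 0 1))
    (hfpos : ∀ x ∈ Ioo (0 : ℝ) 1, 0 < f x)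
    (hF0 : F 0 = 0) (hF1 : F 1 = 1)
    (r : ℝ) (hr : r ∈ Ioc (0 : ℝ) 1) :
    ∀ v ∈ Ioo (0 : ℝ) r, PiFPA F N r v < PiSPA F N r v :=
  PiSPA_gt_PiFPA_same_cutoff_general F f N hN hderiv hfpos hF0 hF1 r hr
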